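/- Let J ⊂ S be a quasi-stable monomial ideal with Pommaret basis P(J) = {x^{α(1)},…,x^{α(m)}} and G = {f_{α(1)},…,f_{α(m)}} a P(J)-marked basis, and let G_Syz = {S_{k;i}} ⊂ S^m_d be the set of syzygies S_{k;i} = x_i e_k − Σ_l P_l^{k;i} e_l. Then for every degree s the set G_Syz^{(s)} = {x^δ S_{k;i} : every variable of x^δ is ≤ x_i, deg(x^δ x_i e_k) = s} generates the A-module Syz(G)_s of syzygies of G of degree s. -/

import Mathlib

open MvPolynomial

namespace MB

/-- Exponent (multi-index) of a term in the variables `x_0, …, x_n`. -/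
abbrev Exp (n : ℕ) := Fin (n+1) →₀ ℕ

variable {n : ℕ}

/-- Total degree of a term. -/
def degE (α : Exp n) : ℕ := α.sum fun _ e => e

/-- `x_i` is a multiplicative variable for the term `x^α`, i.e. `x_i ≤ min(x^α)`. -/
def mult (α : Exp n) (i : Fin (n+1)) : Prop := ∀ j ∈ α.support, i ≤ j

/-- Every variable occurring in `x^δ` is multiplicative for `x^α`. -/
def multExp (α δ : Exp n) : Prop := ∀ i ∈ δ.support, mult α i

/-- Pommaret cone of a term. -/
def pommaretCone (α : Exp n) : Set (Exp n) := {γ | ∃ δ, multExp α δ ∧ γ = α + δ}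

/-- A set of terms is (the set of terms of) a monomial ideal. -/
def IsMonomialIdeal (T : Set (Exp n)) : Prop := ∀ α ∈ T, ∀ β, α + β ∈ T

/-- `P` is a Pommaret basis of the set of terms `T`: the terms of `T` are the
disjoint union of the Pommaret cones of the elements of `P`. -/
def IsPommaretBasis (P : Finset (Exp n)) (T : Set (Exp n)) : Prop :=
  (∀ γ, γ ∈ T ↔ ∃ α ∈ P, γ ∈ pommaretCone α) ∧
  ∀ γ : Exp n, ∀ α ∈ P, ∀ β ∈ P, γ ∈ pommaretCone α → γ ∈ pommaretCone β → α = β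

/-- Lexicographic order on terms (with `x_n > … > x_0` significance). -/
def lexLt (η δ : Exp n) : Prop := ∃ i, η i < δ i ∧ ∀ j, i < j → η j = δ j

/-- Terms of the saturation `(J : (x_0,…,x_n)^∞)` of a monomial ideal. -/
def satTerms (T : Set (Exp n)) : Set (Exp n) :=
  {α | ∃ j : ℕ, ∀ β : Exp n, degE β = j → α + β ∈ T}

section ModuleDefs

variable (A : Type*) [CommRing A] {κ : Type*} [Fintype κ] [DecidableEq κ]

/-- The term `x^α e_k` of the free module. -/
noncomputable def termV (α : Exp n) (k : κ) : κ → MvPolynomial (Fin (n+1)) A :=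
  Pi.single k (monomial α 1)

variable {A}

/-- Homogeneity of degree `s` in `S^m_d` (with weight vector `d`). -/
def IsHomogV (d : κ → ℤ) (f : κ → MvPolynomial (Fin (n+1)) A) (s : ℤ) : Prop :=
  ∀ k, ∀ β ∈ (f k).support, (degE β : ℤ) + d k = s

variable (A)

/-- The degree-`s` component `(S^m_d)_s` as an `A`-submodule. -/
noncomputable def homogCompV (d : κ → ℤ) (s : ℤ) :
    Submodule A (κ → MvPolynomial (Fin (n+1)) A) where
  carrier := {f | IsHomogV d f s}
  add_mem' := by
    intro f g hf hg k β hβ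
    rcases Finset.mem_union.mp (MvPolynomial.support_add hβ) with h | h
    · exact hf k β h
    · exact hg k β h
  zero_mem' := by intro k β hβ; simp at hβ
  smul_mem' := by
    intro a f hf k β hβ
    exact hf k β (MvPolynomial.support_smul hβ)

/-- The set `N(U)` of terms of `S^m_d` not belonging to the monomial module `U = ⊕ J^(k) e_k`. -/
def NUTerms (J : κ → Set (Exp n)) : Set (κ → MvPolynomial (Fin (n+1)) A) :=
  {v | ∃ k, ∃ α, α ∉ J k ∧ v = termV A α k}

/-- The degree-`s` part `N(U)_s`. -/
def NUTermsDeg (d : κ → ℤ) (J : κ → Set (Exp n)) (s : ℤ) :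
    Set (κ → MvPolynomial (Fin (n+1)) A) :=
  {v | ∃ k, ∃ α, α ∉ J k ∧ (degE α : ℤ) + d k = s ∧ v = termV A α k}

variable {A}

/-- A `P(U)`-marked set: for each `x^α e_k` with `α ∈ P k`, the element `g α k` has
head term `x^α e_k` (coefficient `1`) and all other terms in `N(U)` of the same degree. -/
def IsMarkedSetV (d : κ → ℤ) (J : κ → Set (Exp n)) (P : κ → Finset (Exp n))
    (g : Exp n → κ → (κ → MvPolynomial (Fin (n+1)) A)) : Prop :=
  ∀ k, ∀ α ∈ P k, ∀ l, ∀ β ∈ ((g α k - termV A α k) l).support,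
    β ∉ J l ∧ (degE β : ℤ) + d l = (degE α : ℤ) + d k

/-- The underlying set of elements of the marked set `G`. -/
def GSet (P : κ → Finset (Exp n)) (g : Exp n → κ → (κ → MvPolynomial (Fin (n+1)) A)) :
    Set (κ → MvPolynomial (Fin (n+1)) A) :=
  {v | ∃ k, ∃ α ∈ P k, v = g α k}

/-- The set `G^(s)` of multiplicative multiples of elements of `G` of degree `s`. -/
def GSdeg (d : κ → ℤ) (P : κ → Finset (Exp n))
    (g : Exp n → κ → (κ → MvPolynomial (Fin (n+1)) A)) (s : ℤ) :
    Set (κ → MvPolynomial (Fin (n+1)) A) :=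
  {v | ∃ k, ∃ α ∈ P k, ∃ δ : Exp n, multExp α δ ∧
    (degE δ : ℤ) + (degE α : ℤ) + d k = s ∧ v = (monomial δ (1:A)) • g α k}

/-- The `S`-submodule `⟨G⟩` generated by the marked set. -/
noncomputable def GmodS (P : κ → Finset (Exp n))
    (g : Exp n → κ → (κ → MvPolynomial (Fin (n+1)) A)) :
    Submodule (MvPolynomial (Fin (n+1)) A) (κ → MvPolynomial (Fin (n+1)) A) :=
  Submodule.span _ (GSet P g)

/-- The degree-`s` component `⟨G⟩_s` as an `A`-submodule. -/
noncomputable def GmodDeg (d : κ → ℤ) (P : κ → Finset (Exp n))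
    (g : Exp n → κ → (κ → MvPolynomial (Fin (n+1)) A)) (s : ℤ) :
    Submodule A (κ → MvPolynomial (Fin (n+1)) A) :=
  (GmodS P g).restrictScalars A ⊓ homogCompV A d s

/-- `G` is a marked basis: `(S^m_d)_s = ⟨G⟩_s ⊕ ⟨N(U)_s⟩^A` for every degree `s`. -/
def MarkedBasisProp (d : κ → ℤ) (J : κ → Set (Exp n)) (P : κ → Finset (Exp n))
    (g : Exp n → κ → (κ → MvPolynomial (Fin (n+1)) A)) : Prop :=
  ∀ s : ℤ,
    homogCompV A d s = GmodDeg d P g s ⊔ Submodule.span A (NUTermsDeg A d J s) ∧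
    GmodDeg d P g s ⊓ Submodule.span A (NUTermsDeg A d J s) = ⊥

/-- One step of the reduction relation `→_G`. -/
def RedStep (P : κ → Finset (Exp n)) (g : Exp n → κ → (κ → MvPolynomial (Fin (n+1)) A))
    (h h' : κ → MvPolynomial (Fin (n+1)) A) : Prop :=
  ∃ k, ∃ α ∈ P k, ∃ η : Exp n, multExp α η ∧
    (h k).coeff (η + α) ≠ 0 ∧
    h' = h - ((h k).coeff (η + α)) • ((monomial η (1:A)) • g α k)

end ModuleDefs

section IdealDefs

variable {A : Type*} [CommRing A]

/-- A `P(J)`-marked set of polynomials. -/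
def IsMarkedSetI (T : Set (Exp n)) (P : Finset (Exp n))
    (g : Exp n → MvPolynomial (Fin (n+1)) A) : Prop :=
  ∀ α ∈ P, ∀ β ∈ (g α - monomial α (1:A)).support, β ∉ T ∧ degE β = degE α

variable (A)

/-- The degree-`s` monomials not in `T`. -/
def NTermsDegI (T : Set (Exp n)) (s : ℕ) : Set (MvPolynomial (Fin (n+1)) A) :=
  {p | ∃ β, β ∉ T ∧ degE β = s ∧ p = monomial β (1:A)}

variable {A}

/-- Degree-`s` part of the ideal generated by the marked set. -/
noncomputable def IdealDegI (P : Finset (Exp n)) (g : Exp n → MvPolynomial (Fin (n+1)) A)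
    (s : ℕ) : Submodule A (MvPolynomial (Fin (n+1)) A) :=
  (Ideal.span (g '' ↑P)).restrictScalars A ⊓ homogeneousSubmodule (Fin (n+1)) A s

/-- A `P(J)`-marked basis of polynomials: `S_s = (G)_s ⊕ ⟨N(J)_s⟩^A` for all `s`. -/
def IsMarkedBasisI (T : Set (Exp n)) (P : Finset (Exp n))
    (g : Exp n → MvPolynomial (Fin (n+1)) A) : Prop :=
  IsMarkedSetI T P g ∧ ∀ s : ℕ,
    homogeneousSubmodule (Fin (n+1)) A s
      = IdealDegI P g s ⊔ Submodule.span A (NTermsDegI A T s) ∧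
    IdealDegI P g s ⊓ Submodule.span A (NTermsDegI A T s) = ⊥

/-- The polynomial `p` involves only multiplicative variables of `x^α`. -/
def multPoly (α : Exp n) (p : MvPolynomial (Fin (n+1)) A) : Prop :=
  ∀ β ∈ p.support, multExp α β

end IdealDefs

section SyzDefs

variable {A : Type*} [CommRing A]

/-- The map `(c_l) ↦ Σ_l c_l f_{α(l)}` whose kernel is `Syz(G)`. -/
noncomputable def syzMap (P : Finset (Exp n)) (g : Exp n → MvPolynomial (Fin (n+1)) A) :
    (↥P → MvPolynomial (Fin (n+1)) A) →ₗ[MvPolynomial (Fin (n+1)) A]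
      MvPolynomial (Fin (n+1)) A where
  toFun c := ∑ l : ↥P, c l * g l.1
  map_add' c c' := by simp [add_mul, Finset.sum_add_distrib]
  map_smul' a c := by simp [Finset.mul_sum, mul_assoc]

/-- Weight vector for the syzygy module: `d_l = deg x^{α(l)}`. -/
def ddeg (P : Finset (Exp n)) : ↥P → ℤ := fun l => (degE l.1 : ℤ)

/-- Terms of the monomial ideal generated by the nonmultiplicative variables of `x^{α(l)}`. -/
def Jsyz (P : Finset (Exp n)) : ↥P → Set (Exp n) :=
  fun l => {β | ∃ i ∈ β.support, ¬ mult (l : Exp n) i}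

open Classical in
/-- The claimed Pommaret basis `{x_i e_l : x_i nonmultiplicative for x^{α(l)}}`. -/
noncomputable def Psyz (P : Finset (Exp n)) : ↥P → Finset (Exp n) := fun l =>
  (Finset.univ.filter fun i : Fin (n+1) => ¬ mult (l : Exp n) i).image
    fun i => Finsupp.single i 1

open Classical in
/-- The syzygy `S_{k;i} = x_i e_k − Σ_l P_l^{k;i} e_l`. -/
noncomputable def Ssyz (P : Finset (Exp n))
    (Pc : ↥P → Fin (n+1) → ↥P → MvPolynomial (Fin (n+1)) A)
    (k : ↥P) (i : Fin (n+1)) : ↥P → MvPolynomial (Fin (n+1)) A :=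
  fun l => (if l = k then (X i : MvPolynomial (Fin (n+1)) A) else 0) - Pc k i l

/-- The set `G_Syz^(s)`. -/
def GSyzDeg (P : Finset (Exp n))
    (Pc : ↥P → Fin (n+1) → ↥P → MvPolynomial (Fin (n+1)) A) (s : ℤ) :
    Set (↥P → MvPolynomial (Fin (n+1)) A) :=
  {v | ∃ k : ↥P, ∃ i : Fin (n+1), ¬ mult (k : Exp n) i ∧ ∃ δ : Exp n,
    (∀ j ∈ δ.support, j ≤ i) ∧ (degE δ : ℤ) + 1 + ddeg P k = s ∧
    v = (monomial δ (1:A)) • Ssyz P Pc k i}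

end SyzDefs

/-!
A syzygy `H` whose components `H_l` involve only multiplicative variables of `x^{α(l)}` is zero:
if `x^η₀` is the colex-largest exponent occurring in `H`, occurring in `H_l₀`, then
`x^(η₀ + α(l₀))` occurs in no other product `x^η f_α`, because Pommaret cones are disjoint and the
tail terms of the `f_α` lie outside `J`. Applied to the homogeneous components of
`x_i f_k = Σ_l P_l^{k;i} f_l`, this makes the `P_l^{k;i}` homogeneous, so `G_Syz^(s) ⊆ Syz(G)_s`.
Conversely, a bad term `x^γ e_l` of a syzygy (one involving a nonmultiplicative variable of
`x^{α(l)}`) is cancelled by subtracting `x^γ / max(x^γ) · S_{l;max(x^γ)}`. The new bad terms come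
from the multiplicative `P`'s, and their exponents divided by their largest variable are
colex-smaller. Well-founded induction on the colex order thus reduces every syzygy to a
multiplicative one, which is zero.
-/

section Exponents

variable {n : ℕ}

lemma degE_add (a b : Exp n) : degE (a + b) = degE a + degE b :=
  map_add Finsupp.degree a b

lemma degE_single (i : Fin (n+1)) : degE (Finsupp.single i 1) = 1 :=
  Finsupp.degree_single i 1

lemma mult_of_le {α : Exp n} {i j : Fin (n+1)} (hj : mult α j) (hij : i ≤ j) : mult α i :=
  fun k hk => hij.trans (hj k hk)

/-- `max(x^γ)`, with the junk value `x_0` for `γ = 0`. -/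
noncomputable def maxVar (γ : Exp n) : Fin (n+1) :=
  if h : γ.support.Nonempty then γ.support.max' h else 0

noncomputable def dropMaxVar (γ : Exp n) : Exp n := γ - Finsupp.single (maxVar γ) 1

lemma maxVar_mem_support {γ : Exp n} (h : γ.support.Nonempty) : maxVar γ ∈ γ.support := by
  rw [maxVar, dif_pos h]
  exact γ.support.max'_mem h

lemma le_maxVar {γ : Exp n} {j : Fin (n+1)} (hj : j ∈ γ.support) : j ≤ maxVar γ := by
  rw [maxVar, dif_pos ⟨j, hj⟩]
  exact γ.support.le_max' j hj

lemma dropMaxVar_add_single {γ : Exp n} (h : γ.support.Nonempty) :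
    dropMaxVar γ + Finsupp.single (maxVar γ) 1 = γ := by
  refine tsub_add_cancel_of_le (Finsupp.single_le_iff.mpr ?_)
  exact Nat.one_le_iff_ne_zero.mpr (Finsupp.mem_support_iff.mp (maxVar_mem_support h))

lemma le_maxVar_of_mem_support_dropMaxVar {γ : Exp n} {j : Fin (n+1)}
    (hj : j ∈ (dropMaxVar γ).support) : j ≤ maxVar γ :=
  le_maxVar (Finsupp.support_mono tsub_le_self hj)

lemma not_mult_maxVar {α γ : Exp n} {i : Fin (n+1)} (hi : i ∈ γ.support) (hnm : ¬ mult α i) :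
    ¬ mult α (maxVar γ) :=
  fun h => hnm (mult_of_le h (le_maxVar hi))

lemma le_of_add_eq_add_of_toColex_le {η β η' α' : Exp n} (heq : η + β = η' + α')
    (hord : ∀ j ∈ η'.support, ∀ j' ∈ α'.support, j ≤ j')
    (hle : toColex ⇑η ≤ toColex ⇑η') : α' ≤ β := by
  have heq_apply : ∀ j, η j + β j = η' j + α' j := fun j => by
    simpa using DFunLike.congr_fun heq j
  rcases hle.lt_or_eq with ⟨i, hagree, hi⟩ | hη
  · simp only [Pi.toColex_apply] at hagree hi
    intro j
    rcases lt_trichotomy i j with hij | rfl | hji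
    · have := heq_apply j
      rw [hagree j hij] at this
      omega
    · have := heq_apply i
      omega
    · by_contra hlt
      have hj : j ∈ α'.support := Finsupp.mem_support_iff.mpr (by omega)
      have hi' : i ∈ η'.support := Finsupp.mem_support_iff.mpr (by omega)
      exact absurd (hord i hi' j hj) (not_le.mpr hji)
  · obtain rfl : η = η' := DFunLike.coe_injective (toColex_inj.mp hη)
    exact (add_left_cancel heq).ge

lemma toColex_dropMaxVar_lt {α η ε : Exp n} (hε : multExp α ε)
    (hbad : ∃ i ∈ (η + ε).support, ¬ mult α i) :
    toColex ⇑(dropMaxVar (η + ε)) < toColex ⇑η := by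
  obtain ⟨i, hi, hnm⟩ := hbad
  by_contra hlt
  have hle := not_lt.mp hlt
  have hsplit : η + ε = dropMaxVar (η + ε) + Finsupp.single (maxVar (η + ε)) 1 :=
    (dropMaxVar_add_single ⟨i, hi⟩).symm
  have hord : ∀ j ∈ (dropMaxVar (η + ε)).support,
      ∀ j' ∈ (Finsupp.single (maxVar (η + ε)) 1).support, j ≤ j' := by
    intro j hj j' hj'
    rw [Finset.mem_singleton.mp (Finsupp.support_single_subset hj')]
    exact le_maxVar_of_mem_support_dropMaxVar hj
  have hdvd := le_of_add_eq_add_of_toColex_le hsplit hord hle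
  have hmem : maxVar (η + ε) ∈ ε.support := by
    rw [Finsupp.mem_support_iff]
    have := hdvd (maxVar (η + ε))
    simp only [Finsupp.single_eq_same] at this
    omega
  exact not_mult_maxVar hi hnm (hε _ hmem)

end Exponents

section MarkedSets

variable {n : ℕ} {A : Type*} [CommRing A] {T : Set (Exp n)} {P : Finset (Exp n)}
  {g : Exp n → MvPolynomial (Fin (n+1)) A}

lemma IsPommaretBasis.mem (hP : IsPommaretBasis P T) {α : Exp n} (hα : α ∈ P) : α ∈ T :=
  (hP.1 α).mpr ⟨α, hα, 0, fun i hi => by simp at hi, (add_zero α).symm⟩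

lemma IsMarkedSetI.mem_support (hg : IsMarkedSetI T P g) {α : Exp n} (hα : α ∈ P) {β : Exp n}
    (hβ : β ∈ (g α).support) : β = α ∨ (β ∉ T ∧ degE β = degE α) := by
  refine or_iff_not_imp_left.mpr fun hne => hg α hα β ?_
  rw [mem_support_iff, coeff_sub, coeff_monomial, if_neg (Ne.symm hne), sub_zero]
  exact mem_support_iff.mp hβ

lemma IsMarkedSetI.isHomogeneous (hg : IsMarkedSetI T P g) {α : Exp n} (hα : α ∈ P) :
    (g α).IsHomogeneous (degE α) := by
  intro β hβ
  rw [Pi.one_def, ← Finsupp.degree_eq_weight_one]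
  rcases hg.mem_support hα (mem_support_iff.mpr hβ) with rfl | h
  · rfl
  · exact h.2

lemma IsMarkedSetI.coeff_self (hg : IsMarkedSetI T P g) {α : Exp n} (hα : α ∈ P)
    (hαT : α ∈ T) : coeff α (g α) = 1 := by
  by_contra h
  have hmem : α ∈ (g α - monomial α 1).support := by
    rw [mem_support_iff, coeff_sub, coeff_monomial, if_pos rfl]
    exact sub_ne_zero.mpr h
  exact (hg α hα α hmem).1 hαT

lemma eq_of_add_eq_of_toColex_le (hT : IsMonomialIdeal T) (hP : IsPommaretBasis P T)
    (hg : IsMarkedSetI T P g) {α α₀ η η₀ β : Exp n} (hα : α ∈ P) (hα₀ : α₀ ∈ P)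
    (hη : multExp α η) (hη₀ : multExp α₀ η₀) (hβ : β ∈ (g α).support)
    (heq : η + β = η₀ + α₀) (hle : toColex ⇑η ≤ toColex ⇑η₀) :
    α = α₀ ∧ η = η₀ ∧ β = α₀ := by
  rcases hg.mem_support hα hβ with rfl | ⟨hβT, -⟩
  · obtain rfl : β = α₀ := hP.2 (η₀ + α₀) β hα α₀ hα₀
      ⟨η, hη, by rw [← heq, add_comm]⟩ ⟨η₀, hη₀, add_comm _ _⟩
    exact ⟨rfl, add_right_cancel heq, rfl⟩
  · obtain ⟨ρ, rfl⟩ := le_iff_exists_add.mp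
      (le_of_add_eq_add_of_toColex_le heq (fun j hj j' hj' => hη₀ j hj j' hj') hle)
    exact absurd (hT α₀ (hP.mem hα₀) ρ) hβT

open Finset.HasAntidiagonal in
lemma coeff_sum_mul_of_unique {ι σ R : Type*} [Fintype ι] [CommSemiring R]
    (H g : ι → MvPolynomial σ R) {l₀ : ι} {η₀ β₀ : σ →₀ ℕ}
    (huniq : ∀ l η β, η + β = η₀ + β₀ → η ∈ (H l).support → β ∈ (g l).support →
      l = l₀ ∧ η = η₀ ∧ β = β₀) :
    coeff (η₀ + β₀) (∑ l, H l * g l) = coeff η₀ (H l₀) * coeff β₀ (g l₀) := by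
  classical
  have hterm : ∀ l, ∀ x ∈ antidiagonal (η₀ + β₀),
      coeff x.1 (H l) * coeff x.2 (g l) ≠ 0 → l = l₀ ∧ x = (η₀, β₀) := by
    intro l x hx hne
    obtain ⟨hl, h1, h2⟩ := huniq l x.1 x.2 (mem_antidiagonal.mp hx)
      (mem_support_iff.mpr (left_ne_zero_of_mul hne))
      (mem_support_iff.mpr (right_ne_zero_of_mul hne))
    exact ⟨hl, Prod.ext h1 h2⟩
  rw [coeff_sum, Finset.sum_eq_single l₀, coeff_mul, Finset.sum_eq_single (η₀, β₀)]
  · exact fun x hx hne => by_contra fun h => hne (hterm l₀ x hx h).2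
  · exact fun h => (h (mem_antidiagonal.mpr rfl)).elim
  · intro l _ hl
    rw [coeff_mul]
    exact Finset.sum_eq_zero fun x hx => by_contra fun h => hl (hterm l x hx h).1
  · exact fun h => (h (Finset.mem_univ _)).elim

/-- The coefficient of `x^(η₀ + α(l₀))` in `Σ_l H_l f_l`, for the colex-largest exponent `η₀`
occurring in `H`, is that of `x^η₀` in `H_l₀`. -/
theorem eq_zero_of_multPoly_of_sum_mul_eq_zero (hT : IsMonomialIdeal T)
    (hP : IsPommaretBasis P T) (hg : IsMarkedSetI T P g) {H : ↥P → MvPolynomial (Fin (n+1)) A}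
    (hmult : ∀ l : ↥P, multPoly (l : Exp n) (H l)) (hsyz : ∑ l : ↥P, H l * g l = 0) :
    H = 0 := by
  by_contra hne
  obtain ⟨l, hl⟩ := Function.ne_iff.mp hne
  obtain ⟨β, hβ⟩ := ne_zero_iff.mp hl
  obtain ⟨⟨l₀, η₀⟩, h₀, hmax⟩ := (Finset.univ.sigma fun l => (H l).support).exists_max_image
    (fun p => toColex ⇑p.2) ⟨⟨l, β⟩, by simpa using hβ⟩
  simp only [Finset.mem_sigma, Finset.mem_univ, true_and] at h₀
  have huniq : ∀ l η β, η + β = η₀ + (l₀ : Exp n) → η ∈ (H l).support → β ∈ (g l).support →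
      l = l₀ ∧ η = η₀ ∧ β = l₀ := by
    intro l η β heq hη hβ
    obtain ⟨hl, rfl, rfl⟩ := eq_of_add_eq_of_toColex_le hT hP hg l.2 l₀.2 (hmult l η hη)
      (hmult l₀ η₀ h₀) hβ heq (hmax ⟨l, η⟩ (by simpa using hη))
    exact ⟨Subtype.ext hl, rfl, rfl⟩
  have hcoeff := congr_arg (coeff (η₀ + (l₀ : Exp n))) hsyz
  rw [coeff_sum_mul_of_unique H (fun l => g l) huniq, hg.coeff_self l₀.2 (hP.mem l₀.2),
    mul_one, coeff_zero] at hcoeff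
  exact mem_support_iff.mp h₀ hcoeff

end MarkedSets

attribute [local instance] MvPolynomial.gradedAlgebra in
theorem homogeneousComponent_mul_of_isHomogeneous_right {σ R : Type*} [CommSemiring R]
    {p q : MvPolynomial σ R} {d : ℕ} (hq : q.IsHomogeneous d) (u : ℕ) :
    homogeneousComponent u (p * q) = if d ≤ u then homogeneousComponent (u - d) p * q else 0 := by
  rw [← decomposition.decompose'_apply, ← decomposition.decompose'_apply]
  exact DirectSum.coe_decompose_mul_of_right_mem (homogeneousSubmodule σ R) u hq

section HomogeneousVectors

variable {n : ℕ} {A : Type*} [CommRing A] {κ : Type*} {d : κ → ℤ}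

lemma monomial_smul_mem_homogCompV {s : ℤ} {v : κ → MvPolynomial (Fin (n+1)) A}
    (hv : v ∈ homogCompV A d s) (δ : Exp n) (c : A) :
    monomial δ c • v ∈ homogCompV A d (degE δ + s) := by
  intro l β hβ
  rw [Pi.smul_apply, smul_eq_mul, mem_support_iff, coeff_monomial_mul'] at hβ
  split_ifs at hβ with hle
  · have hdeg := hv l (β - δ) (mem_support_iff.mpr (right_ne_zero_of_mul hβ))
    rw [← add_tsub_cancel_of_le hle, degE_add]
    push_cast
    linarith
  · exact absurd rfl hβ

lemma single_X_mem_homogCompV [DecidableEq κ] (k : κ) (i : Fin (n+1)) :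
    Pi.single k (X i) ∈ homogCompV A d (1 + d k) := by
  intro l β hβ
  by_cases hl : l = k
  · subst hl
    rw [Pi.single_eq_same] at hβ
    rw [Finset.mem_singleton.mp (support_monomial_subset hβ), degE_single]
    push_cast
    rfl
  · simp [Pi.single_eq_of_ne hl] at hβ

end HomogeneousVectors

section Syzygies

variable {n : ℕ} {A : Type*} [CommRing A] {T : Set (Exp n)} {P : Finset (Exp n)}
  {g : Exp n → MvPolynomial (Fin (n+1)) A}
  {Pc : ↥P → Fin (n+1) → ↥P → MvPolynomial (Fin (n+1)) A}

/-- `Pc k i l` plays the role of `P_l^{k;i}`. -/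
def IsMultRepr (P : Finset (Exp n)) (g : Exp n → MvPolynomial (Fin (n+1)) A)
    (Pc : ↥P → Fin (n+1) → ↥P → MvPolynomial (Fin (n+1)) A) : Prop :=
  ∀ (k : ↥P) (i : Fin (n+1)), ¬ mult (k : Exp n) i →
    (X i * g (k : Exp n) = ∑ l : ↥P, Pc k i l * g (l : Exp n)) ∧
    ∀ l : ↥P, multPoly (l : Exp n) (Pc k i l)

/-- `Syz(G)_s`. -/
noncomputable def syzDeg (P : Finset (Exp n)) (g : Exp n → MvPolynomial (Fin (n+1)) A) (s : ℤ) :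
    Submodule A (↥P → MvPolynomial (Fin (n+1)) A) :=
  (LinearMap.ker (syzMap P g)).restrictScalars A ⊓ homogCompV A (ddeg P) s

lemma syzMap_apply (c : ↥P → MvPolynomial (Fin (n+1)) A) :
    syzMap P g c = ∑ l : ↥P, c l * g l := rfl

/-- Each homogeneous component of a multiplicative vector whose image is homogeneous of degree
`t` is a multiplicative syzygy, hence zero unless its degree is `t`. -/
theorem mem_homogCompV_of_multPoly (hT : IsMonomialIdeal T) (hP : IsPommaretBasis P T)
    (hg : IsMarkedSetI T P g) {v : ↥P → MvPolynomial (Fin (n+1)) A}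
    (hmult : ∀ l : ↥P, multPoly (l : Exp n) (v l)) {t : ℕ}
    (ht : (syzMap P g v).IsHomogeneous t) : v ∈ homogCompV A (ddeg P) t := by
  intro l β hβ
  by_contra hne
  set u := degE β + degE (l : Exp n)
  set w : ↥P → MvPolynomial (Fin (n+1)) A := fun l' =>
    if degE (l' : Exp n) ≤ u then homogeneousComponent (u - degE (l' : Exp n)) (v l') else 0
  have hw : ∑ l' : ↥P, w l' * g l' = 0 := by
    calc ∑ l' : ↥P, w l' * g l' = ∑ l' : ↥P, homogeneousComponent u (v l' * g l') := by
          refine Finset.sum_congr rfl fun l' _ => ?_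
          rw [homogeneousComponent_mul_of_isHomogeneous_right (hg.isHomogeneous l'.2)]
          split_ifs <;> simp [w, *]
      _ = homogeneousComponent u (syzMap P g v) := (map_sum _ _ _).symm
      _ = 0 := by
          rw [homogeneousComponent_of_mem ht, if_neg]
          exact fun h => hne (by simp only [ddeg, u] at h ⊢; omega)
  have hwmult : ∀ l' : ↥P, multPoly (l' : Exp n) (w l') := by
    intro l' γ hγ
    simp only [w] at hγ
    split_ifs at hγ
    · rw [support_homogeneousComponent, Finset.mem_filter] at hγ
      exact hmult l' γ hγ.1
    · simp at hγ
  have hcoeff : coeff β (w l) = coeff β (v l) := by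
    simp only [w, if_pos (Nat.le_add_left _ _), u, Nat.add_sub_cancel,
      coeff_homogeneousComponent]
    exact if_pos rfl
  rw [eq_zero_of_multPoly_of_sum_mul_eq_zero hT hP hg hwmult hw, Pi.zero_apply, coeff_zero]
    at hcoeff
  exact mem_support_iff.mp hβ hcoeff.symm

lemma Ssyz_eq (k : ↥P) (i : Fin (n+1)) : Ssyz P Pc k i = Pi.single k (X i) - Pc k i := by
  funext l
  by_cases hl : l = k
  · subst hl
    simp [Ssyz]
  · simp [Ssyz, hl]

lemma Ssyz_mem_ker {k : ↥P} {i : Fin (n+1)}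
    (hrepr : X i * g (k : Exp n) = ∑ l : ↥P, Pc k i l * g (l : Exp n)) :
    Ssyz P Pc k i ∈ LinearMap.ker (syzMap P g) := by
  rw [LinearMap.mem_ker, Ssyz_eq, map_sub, syzMap_apply, syzMap_apply, ← hrepr, sub_eq_zero,
    Finset.sum_eq_single k (fun l _ hl => by rw [Pi.single_eq_of_ne hl, zero_mul])
      (fun h => (h (Finset.mem_univ k)).elim), Pi.single_eq_same]

lemma Ssyz_mem_homogCompV (hT : IsMonomialIdeal T) (hP : IsPommaretBasis P T)
    (hg : IsMarkedSetI T P g) {k : ↥P} {i : Fin (n+1)}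
    (hrepr : X i * g (k : Exp n) = ∑ l : ↥P, Pc k i l * g (l : Exp n))
    (hmult : ∀ l : ↥P, multPoly (l : Exp n) (Pc k i l)) :
    Ssyz P Pc k i ∈ homogCompV A (ddeg P) (1 + ddeg P k) := by
  have hPc : Pc k i ∈ homogCompV A (ddeg P) ((1 + degE (k : Exp n) : ℕ) : ℤ) := by
    refine mem_homogCompV_of_multPoly hT hP hg hmult ?_
    rw [syzMap_apply, ← hrepr]
    exact (isHomogeneous_X A i).mul (hg.isHomogeneous k.2)
  rw [Ssyz_eq]
  exact Submodule.sub_mem _ (single_X_mem_homogCompV k i) (by simpa [ddeg] using hPc)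

theorem span_GSyzDeg_le_syzDeg (hT : IsMonomialIdeal T) (hP : IsPommaretBasis P T)
    (hg : IsMarkedSetI T P g) (hPc : IsMultRepr P g Pc) (s : ℤ) :
    Submodule.span A (GSyzDeg P Pc s) ≤ syzDeg P g s := by
  rw [Submodule.span_le]
  rintro _ ⟨k, i, hnm, δ, -, hdeg, rfl⟩
  obtain ⟨hrepr, hmult⟩ := hPc k i hnm
  refine ⟨Submodule.smul_mem _ _ (Ssyz_mem_ker hrepr), ?_⟩
  have := monomial_smul_mem_homogCompV (Ssyz_mem_homogCompV hT hP hg hrepr hmult) δ 1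
  rwa [← add_assoc, hdeg] at this

end Syzygies

section Reduction

variable {n : ℕ} {A : Type*} [CommRing A] {T : Set (Exp n)} {P : Finset (Exp n)}
  {g : Exp n → MvPolynomial (Fin (n+1)) A}
  {Pc : ↥P → Fin (n+1) → ↥P → MvPolynomial (Fin (n+1)) A}
  {H : ↥P → MvPolynomial (Fin (n+1)) A}

open Classical in
noncomputable def badTerms (H : ↥P → MvPolynomial (Fin (n+1)) A) : Finset (↥P × Exp n) :=
  (Finset.univ ×ˢ Finset.univ.biUnion fun l => (H l).support).filter
    fun p => p.2 ∈ (H p.1).support ∧ p.2 ∈ Jsyz P p.1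

lemma mem_badTerms {p : ↥P × Exp n} :
    p ∈ badTerms H ↔ p.2 ∈ (H p.1).support ∧ p.2 ∈ Jsyz P p.1 := by
  simp only [badTerms, Finset.mem_filter, Finset.mem_product, Finset.mem_univ,
    Finset.mem_biUnion, true_and, and_iff_right_iff_imp]
  exact fun h => ⟨p.1, h.1⟩

lemma multPoly_of_badTerms_eq_empty (h : badTerms H = ∅) (l : ↥P) :
    multPoly (l : Exp n) (H l) := by
  intro γ hγ j hj
  by_contra hnm
  simpa [h] using (mem_badTerms (p := (l, γ))).mpr ⟨hγ, j, hj, hnm⟩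

/-- `x^γ / max(x^γ) · S_{l;max(x^γ)}`, whose term `x^γ e_l` cancels the bad term `(l, γ)` of a
syzygy. -/
noncomputable def reductor (Pc : ↥P → Fin (n+1) → ↥P → MvPolynomial (Fin (n+1)) A)
    (p : ↥P × Exp n) : ↥P → MvPolynomial (Fin (n+1)) A :=
  monomial (dropMaxVar p.2) (1 : A) • Ssyz P Pc p.1 (maxVar p.2)

lemma reductor_eq {p : ↥P × Exp n} (hp : p.2.support.Nonempty) :
    reductor Pc p = termV A p.2 p.1
      - monomial (dropMaxVar p.2) (1 : A) • Pc p.1 (maxVar p.2) := by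
  rw [reductor, Ssyz_eq, smul_sub, ← Pi.single_smul', smul_eq_mul, X, monomial_mul, one_mul,
    dropMaxVar_add_single hp, termV]

lemma reductor_mem_GSyzDeg {s : ℤ} (hH : H ∈ homogCompV A (ddeg P) s) {p : ↥P × Exp n}
    (hp : p ∈ badTerms H) : reductor Pc p ∈ GSyzDeg P Pc s := by
  obtain ⟨hsupp, i, hi, hnm⟩ := mem_badTerms.mp hp
  refine ⟨p.1, maxVar p.2, not_mult_maxVar hi hnm, dropMaxVar p.2,
    fun j hj => le_maxVar_of_mem_support_dropMaxVar hj, ?_, rfl⟩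
  have hdeg := congrArg degE (dropMaxVar_add_single ⟨i, hi⟩)
  rw [degE_add, degE_single] at hdeg
  rw [← hH p.1 p.2 hsupp, ← hdeg]
  push_cast
  ring

noncomputable def badPart (H : ↥P → MvPolynomial (Fin (n+1)) A) :
    ↥P → MvPolynomial (Fin (n+1)) A :=
  ∑ p ∈ badTerms H, coeff p.2 (H p.1) • termV A p.2 p.1

lemma coeff_sub_badPart {l : ↥P} {γ : Exp n} (hγ : γ ∈ Jsyz P l) :
    coeff γ ((H - badPart H) l) = 0 := by
  have hsingle : ∀ p : ↥P × Exp n,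
      coeff γ (termV A p.2 p.1 l) = if p = (l, γ) then 1 else 0 := by
    rintro ⟨k, β⟩
    rw [termV]
    by_cases hk : l = k
    · subst hk
      simp [coeff_monomial, eq_comm]
    · simp [Ne.symm hk]
  rw [badPart, Pi.sub_apply, Finset.sum_apply, coeff_sub, coeff_sum]
  simp only [Pi.smul_apply, coeff_smul, hsingle, smul_eq_mul, mul_ite, mul_one, mul_zero,
    Finset.sum_ite_eq', sub_eq_zero]
  split_ifs with hmem
  · rfl
  · by_contra hne
    exact hmem (mem_badTerms.mpr ⟨mem_support_iff.mpr hne, hγ⟩)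

noncomputable def reduce (Pc : ↥P → Fin (n+1) → ↥P → MvPolynomial (Fin (n+1)) A)
    (H : ↥P → MvPolynomial (Fin (n+1)) A) : ↥P → MvPolynomial (Fin (n+1)) A :=
  H - ∑ p ∈ badTerms H, coeff p.2 (H p.1) • reductor Pc p

lemma reduce_eq : reduce Pc H = (H - badPart H)
    + ∑ p ∈ badTerms H, coeff p.2 (H p.1) • (monomial (dropMaxVar p.2) (1 : A) •
      Pc p.1 (maxVar p.2)) := by
  have hreductor : ∀ p ∈ badTerms H, coeff p.2 (H p.1) • reductor Pc p
      = coeff p.2 (H p.1) • termV A p.2 p.1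
        - coeff p.2 (H p.1) • (monomial (dropMaxVar p.2) (1 : A) • Pc p.1 (maxVar p.2)) := by
    intro p hp
    obtain ⟨-, i, hi, -⟩ := mem_badTerms.mp hp
    rw [reductor_eq ⟨i, hi⟩, smul_sub]
  rw [reduce, Finset.sum_congr rfl hreductor, Finset.sum_sub_distrib, badPart]
  abel

lemma exists_toColex_lt_of_mem_badTerms_reduce
    (hmult : ∀ (k : ↥P) i, ¬ mult (k : Exp n) i → ∀ l : ↥P, multPoly (l : Exp n) (Pc k i l))
    {q : ↥P × Exp n} (hq : q ∈ badTerms (reduce Pc H)) :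
    ∃ p ∈ badTerms H, toColex ⇑(dropMaxVar q.2) < toColex ⇑(dropMaxVar p.2) := by
  obtain ⟨hsupp, hbad⟩ := mem_badTerms.mp hq
  rw [mem_support_iff, reduce_eq, Pi.add_apply, coeff_add, coeff_sub_badPart hbad, zero_add,
    Finset.sum_apply, coeff_sum] at hsupp
  obtain ⟨p, hp, hne⟩ := Finset.exists_ne_zero_of_sum_ne_zero hsupp
  rw [Pi.smul_apply, Pi.smul_apply, coeff_smul, smul_eq_mul, smul_eq_mul,
    coeff_monomial_mul'] at hne
  split_ifs at hne with hle
  · obtain ⟨-, i, hi, hnm⟩ := mem_badTerms.mp hp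
    have hε := hmult p.1 _ (not_mult_maxVar hi hnm) q.1 _
      (mem_support_iff.mpr (right_ne_zero_of_mul (right_ne_zero_of_mul hne)))
    refine ⟨p, hp, ?_⟩
    have := toColex_dropMaxVar_lt hε (η := dropMaxVar p.2) (by rwa [add_tsub_cancel_of_le hle])
    rwa [add_tsub_cancel_of_le hle] at this
  · exact absurd (mul_zero _) hne

theorem mem_span_GSyzDeg_of_toColex_lt (hT : IsMonomialIdeal T) (hP : IsPommaretBasis P T)
    (hg : IsMarkedSetI T P g) (hPc : IsMultRepr P g Pc) {s : ℤ} (μ : Colex (Fin (n+1) → ℕ)) :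
    ∀ H ∈ syzDeg P g s, (∀ p ∈ badTerms H, toColex ⇑(dropMaxVar p.2) < μ) →
      H ∈ Submodule.span A (GSyzDeg P Pc s) := by
  induction μ using WellFoundedLT.induction with
  | _ μ ih =>
    intro H hH hlt
    rcases (badTerms H).eq_empty_or_nonempty with hB | hB
    · rw [eq_zero_of_multPoly_of_sum_mul_eq_zero hT hP hg (multPoly_of_badTerms_eq_empty hB) hH.1]
      exact Submodule.zero_mem _
    obtain ⟨p₀, hp₀, hmax⟩ := (badTerms H).exists_max_image (fun p => toColex ⇑(dropMaxVar p.2)) hB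
    have hsum : ∑ p ∈ badTerms H, coeff p.2 (H p.1) • reductor Pc p
        ∈ Submodule.span A (GSyzDeg P Pc s) :=
      Submodule.sum_mem _ fun p hp =>
        Submodule.smul_mem _ _ (Submodule.subset_span (reductor_mem_GSyzDeg hH.2 hp))
    have hreduce : reduce Pc H ∈ Submodule.span A (GSyzDeg P Pc s) := by
      have hmem : reduce Pc H ∈ syzDeg P g s :=
        Submodule.sub_mem _ hH (span_GSyzDeg_le_syzDeg hT hP hg hPc s hsum)
      refine ih _ (hlt p₀ hp₀) _ hmem fun q hq => ?_
      obtain ⟨p, hp, hqp⟩ :=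
        exists_toColex_lt_of_mem_badTerms_reduce (fun k i h => (hPc k i h).2) hq
      exact hqp.trans_le (hmax p hp)
    rw [← sub_add_cancel H (∑ p ∈ badTerms H, coeff p.2 (H p.1) • reductor Pc p)]
    exact Submodule.add_mem _ hreduce hsum

theorem syzDeg_le_span_GSyzDeg (hT : IsMonomialIdeal T) (hP : IsPommaretBasis P T)
    (hg : IsMarkedSetI T P g) (hPc : IsMultRepr P g Pc) (s : ℤ) :
    syzDeg P g s ≤ Submodule.span A (GSyzDeg P Pc s) := by
  intro H hH
  obtain ⟨μ, hμ⟩ := exists_gt (toColex ⇑((badTerms H).sup Prod.snd))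
  refine mem_span_GSyzDeg_of_toColex_lt hT hP hg hPc μ H hH fun p hp => ?_
  have hle : dropMaxVar p.2 ≤ (badTerms H).sup Prod.snd := tsub_le_self.trans (Finset.le_sup hp)
  exact (Pi.toColex_monotone (Finsupp.coe_le_coe.mpr hle)).trans_lt hμ

end Reduction

theorem statement17_general {n : ℕ} {A : Type*} [CommRing A]
    (T : Set (Exp n)) (P : Finset (Exp n))
    (hT : IsMonomialIdeal T) (hP : IsPommaretBasis P T)
    (g : Exp n → MvPolynomial (Fin (n+1)) A) (hG : IsMarkedBasisI T P g)
    (Pc : ↥P → Fin (n+1) → ↥P → MvPolynomial (Fin (n+1)) A)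
    (hPc : ∀ (k : ↥P) (i : Fin (n+1)), ¬ mult (k : Exp n) i →
      (X i * g (k : Exp n) = ∑ l : ↥P, Pc k i l * g (l : Exp n)) ∧
      ∀ l : ↥P, multPoly (l : Exp n) (Pc k i l)) :
    ∀ s : ℤ,
      (LinearMap.ker (syzMap P g)).restrictScalars A ⊓ homogCompV A (ddeg P) s
        = Submodule.span A (GSyzDeg P Pc s) := fun s =>
  le_antisymm (syzDeg_le_span_GSyzDeg hT hP hG.1 hPc s) (span_GSyzDeg_le_syzDeg hT hP hG.1 hPc s)

/-- Lemma `syzgen`: for every degree `s`, the set `G_Syz^(s)` generates the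
`A`-module `Syz(G)_s` of degree-`s` syzygies of the marked basis `G`. -/
theorem statement17 {n : ℕ} {A : Type*} [CommRing A] [IsNoetherianRing A]
    (T : Set (Exp n)) (P : Finset (Exp n))
    (hT : IsMonomialIdeal T) (hP : IsPommaretBasis P T)
    (g : Exp n → MvPolynomial (Fin (n+1)) A) (hG : IsMarkedBasisI T P g)
    (Pc : ↥P → Fin (n+1) → ↥P → MvPolynomial (Fin (n+1)) A)
    (hPc : ∀ (k : ↥P) (i : Fin (n+1)), ¬ mult (k : Exp n) i →
      (X i * g (k : Exp n) = ∑ l : ↥P, Pc k i l * g (l : Exp n)) ∧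
      ∀ l : ↥P, multPoly (l : Exp n) (Pc k i l)) :
    ∀ s : ℤ,
      (LinearMap.ker (syzMap P g)).restrictScalars A ⊓ homogCompV A (ddeg P) s
        = Submodule.span A (GSyzDeg P Pc s) :=
  statement17_general T P hT hP g hG Pc hPc

end MB
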